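/- Let G_1,…,G_k be finite simple connected graphs on pairwise disjoint vertex sets, each with at least two vertices, and let ℓ be the number of indices i for which G_i forces a 𝟙 representation. Pick v_i ∈ V(G_i) for each i, let T be a tree on vertex set {v_1,…,v_k}, and let G be the graph with vertex set ∪_i V(G_i) and edge set E(T) ∪ ∪_i E(G_i). Then cdim(G) = max{ℓ−1, 0} + Σ_{i=1}^{k} cdim(G_i). -/

import Mathlib

/-!
Inside the tree join, a path between two vertices of the same part `Gᵢ` never leaves `Gᵢ`: it
could only leave and re-enter through the anchor `vᵢ`. So local connectivities inside a part are
those of `Gᵢ`. Between different parts the local connectivity is `1`: every path passes through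
the anchor of each part on the tree path between them, and when both ends are anchors of adjacent
parts the tree edge is the only path. Hence `W` resolves the join iff each `W ∩ V(Gᵢ)` resolves
`Gᵢ` and at most one `W ∩ V(Gᵢ)` admits a `𝟙` representation (two such vertices in different
parts would have the same representation). So all parts forcing a `𝟙` representation but one
need a vertex beyond a basis, and one vertex suffices: the `𝟙`-vertex of a basis.
-/

open SimpleGraph

namespace ConnDim

open Classical in
/-- The local connectivity `κ(a,b)`: the maximum number of internally vertex-disjoint
`a`-`b` paths, with `κ(a,a) = ∞`. -/
noncomputable def localConn {V : Type*} (G : SimpleGraph V) (a b : V) : ℕ∞ :=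
  if a = b then ⊤
  else sSup {n : ℕ∞ | ∃ Ps : Finset (G.Path a b),
    (∀ p ∈ Ps, ∀ q ∈ Ps, p ≠ q → ∀ x : V,
        x ∈ p.1.support → x ∈ q.1.support → x = a ∨ x = b) ∧
    (Ps.card : ℕ∞) = n}

/-- A set `W` is connectivity resolving if vertices are determined by their
local connectivities to the elements of `W`. -/
def ConnResolving {V : Type*} (G : SimpleGraph V) (W : Set V) : Prop :=
  ∀ u v : V, (∀ w ∈ W, localConn G u w = localConn G v w) → u = v

/-- The connectivity dimension: minimum cardinality of a connectivity resolving set. -/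
noncomputable def cdim {V : Type*} (G : SimpleGraph V) : ℕ :=
  sInf {n : ℕ | ∃ W : Set V, ConnResolving G W ∧ W.ncard = n}

/-- A set `W` is metric resolving if vertices are determined by their distances
to the elements of `W`. -/
def MetricResolving {V : Type*} (G : SimpleGraph V) (W : Set V) : Prop :=
  ∀ u v : V, (∀ w ∈ W, G.dist u w = G.dist v w) → u = v

/-- The metric dimension: minimum cardinality of a metric resolving set. -/
noncomputable def mdim {V : Type*} (G : SimpleGraph V) : ℕ :=
  sInf {n : ℕ | ∃ W : Set V, MetricResolving G W ∧ W.ncard = n}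

/-- `G` forces a `𝟙` representation if every minimum resolving set (basis) `B` admits a
vertex whose local connectivity to every element of `B` equals `1`. -/
def ForcesOne {V : Type*} (G : SimpleGraph V) : Prop :=
  ∀ B : Set V, ConnResolving G B → B.ncard = cdim G →
    ∃ v : V, ∀ b ∈ B, localConn G v b = 1

/-- A cut vertex of a connected graph: its removal disconnects the graph. -/
def IsCutVertex {V : Type*} (G : SimpleGraph V) (v : V) : Prop :=
  G.Connected ∧ ¬ (G.induce {u : V | u ≠ v}).Connected

/-- A block of `G`: a maximal connected subgraph of `G` without a cut vertex of itself. -/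
def IsBlock {V : Type*} (G : SimpleGraph V) (H : G.Subgraph) : Prop :=
  H.coe.Connected ∧ (∀ v, ¬ IsCutVertex H.coe v) ∧
  ∀ H' : G.Subgraph, H ≤ H' → H'.coe.Connected → (∀ v, ¬ IsCutVertex H'.coe v) → H' = H

/-- The number of blocks of `G`. -/
noncomputable def numBlocks {V : Type*} (G : SimpleGraph V) : ℕ :=
  Nat.card {H : G.Subgraph // IsBlock G H}

/-- Two vertices are twins if they have the same neighborhood in the graph with
both of them deleted. -/
def AreTwins {V : Type*} (G : SimpleGraph V) (a b : V) : Prop :=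
  ∀ x : V, x ≠ a → x ≠ b → (G.Adj a x ↔ G.Adj b x)

/-- The threshold graph generated by a binary sequence `L` (`false` = isolated vertex,
`true` = dominating vertex): two vertices are adjacent iff the later one was added
as a dominating vertex. -/
def thresholdGraph (L : List Bool) : SimpleGraph (Fin L.length) :=
  SimpleGraph.fromRel (fun i j => i < j ∧ L.get j = true)

/-- The alternating binary sequence `0,1,0,1,…,0,1` of length `2 * n`. -/
def altList (n : ℕ) : List Bool := (List.replicate n [false, true]).flatten

/-- The join of two graphs on disjoint vertex sets by the bridge `v₁v₂`. -/
def bridgeJoin {V₁ V₂ : Type*} (G₁ : SimpleGraph V₁) (G₂ : SimpleGraph V₂)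
    (v₁ : V₁) (v₂ : V₂) : SimpleGraph (V₁ ⊕ V₂) :=
  G₁.map Function.Embedding.inl ⊔ G₂.map Function.Embedding.inr
    ⊔ SimpleGraph.fromEdgeSet {s(Sum.inl v₁, Sum.inr v₂)}

/-- The graph obtained from `G` by attaching a new leaf (the vertex `none`) to `u`. -/
def attachLeaf {V : Type*} (G : SimpleGraph V) (u : V) : SimpleGraph (Option V) :=
  G.map Function.Embedding.some ⊔ SimpleGraph.fromEdgeSet {s(some u, (none : Option V))}

/-- The chain of `t` triangles (triangle `i` has vertices `inl i.castSucc`, `inl i.succ`,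
`inr (inl i)`), with a leaf `inr (inr ())` attached to the end vertex `inl 0`. -/
def triChain (t : ℕ) : SimpleGraph (Fin (t+1) ⊕ Fin t ⊕ Unit) :=
  SimpleGraph.fromRel (fun a b =>
    match a, b with
    | Sum.inl i, Sum.inl j => (i : ℕ) + 1 = (j : ℕ)
    | Sum.inr (Sum.inl i), Sum.inl j => j = Fin.castSucc i ∨ j = Fin.succ i
    | Sum.inr (Sum.inr _), Sum.inl j => j = 0
    | _, _ => False)

section LocalConn

variable {α β : Type*} {G : SimpleGraph α} {H : SimpleGraph β} {a b : α}

def InternallyDisjoint (Ps : Finset (G.Path a b)) : Prop :=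
  ∀ p ∈ Ps, ∀ q ∈ Ps, p ≠ q → ∀ x : α, x ∈ p.1.support → x ∈ q.1.support → x = a ∨ x = b

lemma localConn_of_ne (h : a ≠ b) :
    localConn G a b = sSup {n : ℕ∞ | ∃ Ps : Finset (G.Path a b),
      InternallyDisjoint Ps ∧ (Ps.card : ℕ∞) = n} := by
  rw [localConn, if_neg h]
  rfl

@[simp]
lemma localConn_self (a : α) : localConn G a a = ⊤ := if_pos rfl

lemma localConn_ne_top [Fintype α] (h : a ≠ b) : localConn G a b ≠ ⊤ := by
  classical
  refine ne_top_of_le_ne_top (ENat.natCast_ne_top (Fintype.card (G.Path a b))) ?_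
  rw [localConn_of_ne h]
  refine sSup_le ?_
  rintro n ⟨Ps, -, rfl⟩
  exact_mod_cast Ps.card_le_univ

lemma localConn_eq_top_iff [Fintype α] : localConn G a b = ⊤ ↔ a = b :=
  ⟨fun h => by_contra fun hne => localConn_ne_top hne h, fun h => h ▸ localConn_self a⟩

lemma one_le_localConn (h : G.Reachable a b) : 1 ≤ localConn G a b := by
  classical
  rcases eq_or_ne a b with rfl | hne
  · simp
  rw [localConn_of_ne hne]
  obtain ⟨p⟩ := h
  refine le_sSup ⟨{p.toPath}, ?_, by simp⟩
  simp +contextual [InternallyDisjoint]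

lemma localConn_eq_one (hne : a ≠ b) (hr : G.Reachable a b)
    (hcut : ∀ p q : G.Path a b, p ≠ q →
      ∃ x ∈ p.1.support, x ∈ q.1.support ∧ x ≠ a ∧ x ≠ b) :
    localConn G a b = 1 := by
  refine le_antisymm ?_ (one_le_localConn hr)
  rw [localConn_of_ne hne]
  refine sSup_le ?_
  rintro n ⟨Ps, hPs, rfl⟩
  by_contra! hgt
  obtain ⟨p, hp, q, hq, hpq⟩ := Finset.one_lt_card.1 (by exact_mod_cast hgt)
  obtain ⟨x, hxp, hxq, hxa, hxb⟩ := hcut p q hpq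
  exact (hPs p hp q hq hpq x hxp hxq).elim hxa hxb

lemma localConn_eq_one_of_forall_mem_support (hne : a ≠ b) (hr : G.Reachable a b) {x : α}
    (hxa : x ≠ a) (hxb : x ≠ b) (hx : ∀ p : G.Path a b, x ∈ p.1.support) :
    localConn G a b = 1 :=
  localConn_eq_one hne hr fun p q _ => ⟨x, hx p, hx q, hxa, hxb⟩

lemma localConn_eq_one_of_subsingleton (hne : a ≠ b) (hr : G.Reachable a b)
    [Subsingleton (G.Path a b)] : localConn G a b = 1 :=
  localConn_eq_one hne hr fun p q hpq => (hpq (Subsingleton.elim p q)).elim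

lemma internallyDisjoint_map_iff (f : G ↪g H) (Ps : Finset (G.Path a b)) :
    InternallyDisjoint (Ps.map ⟨Path.mapEmbedding f, Path.mapEmbedding_injective f a b⟩) ↔
      InternallyDisjoint Ps := by
  simp only [InternallyDisjoint, Finset.forall_mem_map, Function.Embedding.coeFn_mk,
    (Path.mapEmbedding_injective f a b).ne_iff, Path.mapEmbedding_coe, Walk.support_map,
    List.mem_map, forall_exists_index, and_imp, forall_apply_eq_imp_iff₂, Embedding.coe_toHom,
    f.injective.eq_iff]
  refine forall₂_congr fun p _ => forall₂_congr fun q _ => forall_congr' fun _ =>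
    forall₂_congr fun x _ => ⟨fun h hx => h x hx rfl, fun h y hy hyx => h (hyx ▸ hy)⟩

lemma localConn_map_of_surjective (f : G ↪g H)
    (hsurj : Function.Surjective (Path.mapEmbedding f : G.Path a b → H.Path (f a) (f b))) :
    localConn H (f a) (f b) = localConn G a b := by
  rcases eq_or_ne a b with rfl | hne
  · simp
  let e : G.Path a b ≃ H.Path (f a) (f b) :=
    Equiv.ofBijective _ ⟨Path.mapEmbedding_injective f a b, hsurj⟩
  rw [localConn_of_ne hne, localConn_of_ne (f.injective.ne hne)]
  congr 1
  ext n
  constructor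
  · rintro ⟨Qs, hQs, rfl⟩
    have hQs' : (Qs.map e.symm.toEmbedding).map e.toEmbedding = Qs := by simp [Finset.map_map]
    exact ⟨_, (internallyDisjoint_map_iff f _).1 (hQs' ▸ hQs), by simp⟩
  · rintro ⟨Ps, hPs, rfl⟩
    exact ⟨_, (internallyDisjoint_map_iff f Ps).2 hPs, by simp⟩

end LocalConn

section Resolving

variable {α : Type*} {G : SimpleGraph α} {W : Set α}

lemma connResolving_univ [Fintype α] : ConnResolving G Set.univ := fun u w h =>
  localConn_eq_top_iff.1 <| by simpa using h w (Set.mem_univ w)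

lemma ConnResolving.mono {W' : Set α} (h : W ⊆ W') (hW : ConnResolving G W) :
    ConnResolving G W' :=
  fun u w huw => hW u w fun x hx => huw x (h hx)

lemma cdim_le_ncard (hW : ConnResolving G W) : cdim G ≤ W.ncard :=
  Nat.sInf_le ⟨W, hW, rfl⟩

lemma ConnResolving.exists_ncard_eq_cdim (hW : ConnResolving G W) :
    ∃ B : Set α, ConnResolving G B ∧ B.ncard = cdim G :=
  Nat.sInf_mem (s := {n | ∃ B, ConnResolving G B ∧ B.ncard = n}) ⟨_, W, hW, rfl⟩

lemma cdim_eq_of_forall_le_ncard {n : ℕ} (hle : ∀ W, ConnResolving G W → n ≤ W.ncard)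
    (hex : ∃ W, ConnResolving G W ∧ W.ncard = n) : cdim G = n := by
  obtain ⟨W, hW, rfl⟩ := hex
  refine le_antisymm (cdim_le_ncard hW) ?_
  obtain ⟨B, hB, hcard⟩ := hW.exists_ncard_eq_cdim
  rw [← hcard]
  exact hle B hB

/-- `W` admits a `𝟙` representation, in the sense of `ForcesOne`. -/
def HasOneRep (G : SimpleGraph α) (W : Set α) : Prop :=
  ∃ u, ∀ w ∈ W, localConn G u w = 1

lemma cdim_add_one_le_ncard (hG : ForcesOne G) (hW : ConnResolving G W)
    (hW₁ : ¬ HasOneRep G W) : cdim G + 1 ≤ W.ncard :=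
  (cdim_le_ncard hW).lt_of_ne fun h => hW₁ (hG W hW h.symm)

open Classical in
lemma exists_connResolving_not_hasOneRep [Fintype α] (G : SimpleGraph α) :
    ∃ W : Set α, ConnResolving G W ∧ ¬ HasOneRep G W ∧
      W.ncard = cdim G + if ForcesOne G then 1 else 0 := by
  by_cases hG : ForcesOne G
  · obtain ⟨B, hB, hcard⟩ := (connResolving_univ (G := G)).exists_ncard_eq_cdim
    obtain ⟨x, hx⟩ := hG B hB hcard
    have hxB : x ∉ B := fun hxB => by simpa using hx x hxB
    refine ⟨insert x B, hB.mono (Set.subset_insert x B), ?_, ?_⟩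
    · -- a vertex with `κ = 1` to all of `insert x B` has the same representation as `x`
      rintro ⟨u, hu⟩
      have hux : u = x := hB u x fun w hw =>
        (hu w (Set.mem_insert_of_mem x hw)).trans (hx w hw).symm
      simpa [hux] using hu x (Set.mem_insert x B)
    · rw [Set.ncard_insert_of_notMem hxB, hcard, if_pos hG]
  · obtain ⟨B, hB, hcard, hB₁⟩ :
        ∃ B, ConnResolving G B ∧ B.ncard = cdim G ∧ ¬ HasOneRep G B := by
      simpa [ForcesOne, HasOneRep] using hG
    exact ⟨B, hB, hB₁, by simp [hcard, hG]⟩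

end Resolving

lemma exists_walk_map_eq {α β : Type*} {G : SimpleGraph α} {H : SimpleGraph β} (f : G ↪g H) :
    ∀ {x y : β} (p : H.Walk x y), (∀ z ∈ p.support, z ∈ Set.range f) →
      ∀ {a b : α} (ha : f a = x) (hb : f b = y),
        ∃ q : G.Walk a b, q.map f.toHom = p.copy ha.symm hb.symm := by
  intro x y p
  induction p with
  | nil =>
    rintro - a b rfl hb
    obtain rfl := f.injective hb
    exact ⟨.nil, rfl⟩
  | cons h p ih =>
    rintro hp a b rfl rfl
    obtain ⟨c, rfl⟩ := hp _ (p.start_mem_support.tail _)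
    obtain ⟨q, hq⟩ := ih (fun z hz => hp z (hz.tail _)) rfl rfl
    exact ⟨.cons (f.map_adj_iff.1 h) q, by simpa using hq⟩

lemma _root_.SimpleGraph.IsAcyclic.support_subset_of_isPath {α : Type*} {G : SimpleGraph α}
    (hG : G.IsAcyclic) {a b : α} {q : G.Walk a b} (hq : q.IsPath) (p : G.Walk a b) :
    q.support ⊆ p.support := by
  classical
  have := hG.subsingleton_path a b
  obtain rfl : q = p.bypass :=
    congrArg Subtype.val (Subsingleton.elim ⟨q, hq⟩ ⟨p.bypass, p.bypass_isPath⟩)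
  exact p.support_bypass_subset_support

lemma _root_.SimpleGraph.Walk.IsPath.adj_of_forall_mem_support {α : Type*} {G : SimpleGraph α}
    {a b : α} {q : G.Walk a b} (hq : q.IsPath) (hab : a ≠ b)
    (h : ∀ m ∈ q.support, m = a ∨ m = b) : G.Adj a b := by
  obtain ⟨c, hac, q, rfl⟩ := Walk.exists_eq_cons_of_ne hab q
  rw [Walk.cons_isPath_iff] at hq
  rcases h c (by simp) with rfl | rfl
  · exact (hq.2 q.start_mem_support).elim
  · exact hac

section TreeJoin

variable {ι : Type*} {V : ι → Type*} {Gs : ∀ i, SimpleGraph (V i)} {v : ∀ i, V i}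
  {T : SimpleGraph ι} {x y : Σ i, V i} {W : Set (Σ i, V i)}

variable (Gs v T) in
/-- The graph of the theorem; `⟨i, v i⟩` is the anchor of the part `i`. -/
def treeJoin : SimpleGraph (Σ i, V i) :=
  (⨆ i, (Gs i).map (⟨Sigma.mk i, sigma_mk_injective⟩ : V i ↪ Σ j, V j))
    ⊔ T.map (⟨fun i => ⟨i, v i⟩, fun _ _ h => congrArg Sigma.fst h⟩ : ι ↪ Σ j, V j)

lemma treeJoin_adj :
    (treeJoin Gs v T).Adj x y ↔
      (∃ i a b, (Gs i).Adj a b ∧ x = ⟨i, a⟩ ∧ y = ⟨i, b⟩) ∨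
        (T.Adj x.1 y.1 ∧ x = ⟨x.1, v x.1⟩ ∧ y = ⟨y.1, v y.1⟩) := by
  simp only [treeJoin, sup_adj, iSup_adj, map_adj, Function.Embedding.coeFn_mk]
  constructor
  · rintro (⟨i, -, a, b, hab, rfl, rfl⟩ | ⟨i, j, hij, rfl, rfl⟩)
    · exact .inl ⟨i, a, b, hab, rfl, rfl⟩
    · exact .inr ⟨hij, rfl, rfl⟩
  · rintro (⟨i, a, b, hab, rfl, rfl⟩ | ⟨hxy, hx, hy⟩)
    · exact .inl ⟨i, fun h => hab.ne (sigma_mk_injective h), a, b, hab, rfl, rfl⟩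
    · exact .inr ⟨x.1, y.1, hxy, hx.symm, hy.symm⟩

lemma treeJoin_adj_mk {i : ι} {a b : V i} :
    (treeJoin Gs v T).Adj ⟨i, a⟩ ⟨i, b⟩ ↔ (Gs i).Adj a b := by
  rw [treeJoin_adj]
  constructor
  · rintro (⟨j, a', b', h, ha, hb⟩ | ⟨h, -, -⟩)
    · cases ha
      cases hb
      exact h
    · exact (h.ne rfl).elim
  · exact fun h => .inl ⟨i, a, b, h, rfl, rfl⟩

lemma treeJoin_adj_anchor {i j : ι} (h : T.Adj i j) :
    (treeJoin Gs v T).Adj ⟨i, v i⟩ ⟨j, v j⟩ :=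
  treeJoin_adj.2 (.inr ⟨h, rfl, rfl⟩)

lemma eq_anchor_of_treeJoin_adj (h : (treeJoin Gs v T).Adj x y)
    (hxy : x.1 ≠ y.1) : T.Adj x.1 y.1 ∧ x = ⟨x.1, v x.1⟩ ∧ y = ⟨y.1, v y.1⟩ := by
  rcases treeJoin_adj.1 h with ⟨i, a, b, -, rfl, rfl⟩ | h
  · exact (hxy rfl).elim
  · exact h

variable (Gs v T) in
def partEmbedding (i : ι) : Gs i ↪g treeJoin Gs v T :=
  ⟨⟨Sigma.mk i, sigma_mk_injective⟩, treeJoin_adj_mk⟩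

lemma anchor_mem_support (p : (treeJoin Gs v T).Walk x y) {z : Σ i, V i}
    (hz : z ∈ p.support) (hzx : z.1 ≠ x.1) : (⟨z.1, v z.1⟩ : Σ i, V i) ∈ p.support := by
  induction p with
  | nil =>
    rw [Walk.mem_support_nil_iff] at hz
    exact (hzx (congrArg Sigma.fst hz)).elim
  | @cons x c y h q ih =>
    rw [Walk.support_cons, List.mem_cons] at hz
    rcases hz with rfl | hz
    · exact (hzx rfl).elim
    refine List.mem_cons_of_mem _ ?_
    by_cases hcz : c.1 = z.1
    · obtain ⟨-, -, hc⟩ := eq_anchor_of_treeJoin_adj h (hcz ▸ hzx.symm)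
      rw [← hcz, ← hc]
      exact q.start_mem_support
    · exact ih hz (Ne.symm hcz)

lemma exists_walk_fst_support_subset (p : (treeJoin Gs v T).Walk x y) :
    ∃ q : T.Walk x.1 y.1, q.support ⊆ p.support.map Sigma.fst := by
  induction p with
  | nil => exact ⟨.nil, by simp⟩
  | @cons x c y h p ih =>
    obtain ⟨q, hq⟩ := ih
    by_cases hxc : x.1 = c.1
    · refine ⟨q.copy hxc.symm rfl, ?_⟩
      rw [Walk.support_copy, Walk.support_cons, List.map_cons]
      exact List.Subset.trans hq (List.subset_cons_self _ _)
    · refine ⟨.cons (eq_anchor_of_treeJoin_adj h hxc).1 q, ?_⟩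
      simpa using List.cons_subset_cons _ hq

lemma anchor_mem_support_of_mem_path (hT : T.IsAcyclic) (p : (treeJoin Gs v T).Walk x y)
    (hxy : x.1 ≠ y.1) {q : T.Walk x.1 y.1} (hq : q.IsPath) {m : ι} (hm : m ∈ q.support) :
    (⟨m, v m⟩ : Σ i, V i) ∈ p.support := by
  obtain ⟨q', hq'⟩ := exists_walk_fst_support_subset p
  obtain ⟨z, hz, rfl⟩ := List.mem_map.1 (hq' (hT.support_subset_of_isPath hq q' hm))
  by_cases hzx : z.1 = x.1
  · rw [hzx]
    simpa using anchor_mem_support p.reverse (z := x) (by simp) hxy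
  · exact anchor_mem_support p hz hzx

lemma fst_eq_of_mem_support_of_isPath {p : (treeJoin Gs v T).Walk x y} (hp : p.IsPath)
    (hxy : x.1 = y.1) {z : Σ i, V i} (hz : z ∈ p.support) : z.1 = x.1 := by
  induction p with
  | nil => rw [Walk.mem_support_nil_iff.1 hz]
  | @cons x c y h q ih =>
    rw [Walk.cons_isPath_iff] at hp
    by_cases hxc : x.1 = c.1
    · rw [Walk.support_cons, List.mem_cons] at hz
      rcases hz with rfl | hz
      · rfl
      · rw [ih hp.1 (hxc ▸ hxy) hz, hxc]
    · -- the path leaves the part of `x` through its anchor and must return through it again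
      obtain ⟨-, hx, -⟩ := eq_anchor_of_treeJoin_adj h hxc
      have := anchor_mem_support q (z := y) q.end_mem_support fun h => hxc (hxy.trans h)
      rw [← hxy, ← hx] at this
      exact (hp.2 this).elim

lemma treeJoin_reachable (hGs : ∀ i, (Gs i).Preconnected) (hT : T.Preconnected)
    (x y : Σ i, V i) : (treeJoin Gs v T).Reachable x y := by
  let anchorHom : T →g treeJoin Gs v T := ⟨fun i => ⟨i, v i⟩, treeJoin_adj_anchor⟩
  have hpart (i : ι) (a b : V i) : (treeJoin Gs v T).Reachable ⟨i, a⟩ ⟨i, b⟩ :=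
    (hGs i a b).map (partEmbedding Gs v T i).toHom
  exact ((hpart x.1 x.2 (v x.1)).trans ((hT x.1 y.1).map anchorHom)).trans
    (hpart y.1 (v y.1) y.2)

lemma localConn_treeJoin_mk {i : ι} (a b : V i) :
    localConn (treeJoin Gs v T) ⟨i, a⟩ ⟨i, b⟩ = localConn (Gs i) a b := by
  refine localConn_map_of_surjective (partEmbedding Gs v T i) fun P => ?_
  have hrange (z) (hz : z ∈ P.1.support) : z ∈ Set.range (partEmbedding Gs v T i) := by
    obtain ⟨j, c⟩ := z
    obtain rfl : j = i := fst_eq_of_mem_support_of_isPath P.2 rfl hz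
    exact ⟨c, rfl⟩
  obtain ⟨q, hq⟩ := exists_walk_map_eq (partEmbedding Gs v T i) P.1 hrange rfl rfl
  have hqP : q.map (partEmbedding Gs v T i).toHom = P.1 := hq
  exact ⟨⟨q, (hqP ▸ P.2).of_map⟩, Subtype.ext hqP⟩

lemma subsingleton_path_anchor (hT : T.IsAcyclic) {i j : ι} (hij : T.Adj i j) :
    Subsingleton ((treeJoin Gs v T).Path ⟨i, v i⟩ ⟨j, v j⟩) := by
  suffices h : ∀ P : (treeJoin Gs v T).Path ⟨i, v i⟩ ⟨j, v j⟩,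
      P.1 = .cons (treeJoin_adj_anchor hij) .nil from
    ⟨fun P Q => Subtype.ext ((h P).trans (h Q).symm)⟩
  rintro ⟨P, hP⟩
  change P = _
  obtain ⟨c, h, rest, rfl⟩ :=
    Walk.exists_eq_cons_of_ne (fun h => hij.ne (congrArg Sigma.fst h)) P
  rw [Walk.cons_isPath_iff] at hP
  by_cases hcj : c = ⟨j, v j⟩
  · subst hcj
    rw [(Walk.isPath_iff_nil.1 hP.1).eq_nil]
  refine (hP.2 ?_).elim
  by_cases hci : c.1 = i
  · rw [← hci]
    simpa using anchor_mem_support rest.reverse (z := c) (by simp) (hci ▸ hij.ne)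
  · -- `c` is the anchor of a tree neighbour of `i` other than `j`,
    -- so the tree path from `c.1` to `j` runs through `i`
    obtain ⟨hic, -, hc⟩ := eq_anchor_of_treeJoin_adj h (Ne.symm hci)
    have hcj' : c.1 ≠ j := fun h' => hcj (hc.trans (by rw [h']))
    refine anchor_mem_support_of_mem_path hT rest hcj'
      (q := .cons hic.symm (.cons hij .nil)) ?_ (by simp)
    simp [Walk.cons_isPath_iff, hci, hcj', hij.ne]

lemma localConn_treeJoin_of_fst_ne (hGs : ∀ i, (Gs i).Preconnected) (hT : T.IsTree)
    (hxy : x.1 ≠ y.1) : localConn (treeJoin Gs v T) x y = 1 := by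
  have hne : x ≠ y := fun h => hxy (congrArg Sigma.fst h)
  have hr := treeJoin_reachable (v := v) hGs hT.connected.preconnected x y
  obtain ⟨q, hq, -⟩ := hT.existsUnique_path x.1 y.1
  by_cases hsep : ∃ m ∈ q.support, (⟨m, v m⟩ : Σ i, V i) ≠ x ∧ ⟨m, v m⟩ ≠ y
  · obtain ⟨m, hm, hmx, hmy⟩ := hsep
    exact localConn_eq_one_of_forall_mem_support hne hr hmx hmy fun P =>
      anchor_mem_support_of_mem_path hT.isAcyclic P.1 hxy hq hm
  · -- otherwise both ends are anchors and the tree path between their parts is a single edge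
    have hanchor (m) (hm : m ∈ q.support) : (⟨m, v m⟩ : Σ i, V i) = x ∨ ⟨m, v m⟩ = y := by
      by_contra! h
      exact hsep ⟨m, hm, h⟩
    obtain ⟨i, a⟩ := x
    obtain ⟨j, b⟩ := y
    obtain rfl : v i = a := by
      simpa [hxy] using hanchor i q.start_mem_support
    obtain rfl : v j = b := by
      simpa [Ne.symm hxy] using hanchor j q.end_mem_support
    have hij : T.Adj i j := hq.adj_of_forall_mem_support hxy fun m hm =>
      (hanchor m hm).imp (congrArg Sigma.fst) (congrArg Sigma.fst)
    have := subsingleton_path_anchor (Gs := Gs) (v := v) hT.isAcyclic hij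
    exact localConn_eq_one_of_subsingleton hne hr

lemma forall_localConn_treeJoin_eq_iff (hGs : ∀ i, (Gs i).Preconnected) (hT : T.IsTree)
    {i : ι} (a b : V i) :
    (∀ z ∈ W, localConn (treeJoin Gs v T) ⟨i, a⟩ z = localConn (treeJoin Gs v T) ⟨i, b⟩ z) ↔
      ∀ y ∈ Sigma.mk i ⁻¹' W, localConn (Gs i) a y = localConn (Gs i) b y := by
  refine ⟨fun h y hy => ?_, fun h => ?_⟩
  · simpa [localConn_treeJoin_mk] using h ⟨i, y⟩ hy
  rintro ⟨m, y⟩ hy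
  rcases eq_or_ne i m with rfl | hm
  · simpa [localConn_treeJoin_mk] using h y hy
  · rw [localConn_treeJoin_of_fst_ne hGs hT hm, localConn_treeJoin_of_fst_ne hGs hT hm]

lemma forall_localConn_treeJoin_eq_iff_of_ne (hGs : ∀ i, (Gs i).Preconnected) (hT : T.IsTree)
    {i j : ι} (hij : i ≠ j) (a : V i) (b : V j) :
    (∀ z ∈ W, localConn (treeJoin Gs v T) ⟨i, a⟩ z = localConn (treeJoin Gs v T) ⟨j, b⟩ z) ↔
      (∀ y ∈ Sigma.mk i ⁻¹' W, localConn (Gs i) a y = 1) ∧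
        ∀ y ∈ Sigma.mk j ⁻¹' W, localConn (Gs j) b y = 1 := by
  have hκ {m n : ι} (hmn : m ≠ n) (c : V m) (y : V n) :
      localConn (treeJoin Gs v T) ⟨m, c⟩ ⟨n, y⟩ = 1 :=
    localConn_treeJoin_of_fst_ne hGs hT hmn
  refine ⟨fun h => ⟨fun y hy => ?_, fun y hy => ?_⟩, fun ⟨ha, hb⟩ => ?_⟩
  · simpa [localConn_treeJoin_mk, hκ (Ne.symm hij)] using h ⟨i, y⟩ hy
  · simpa [localConn_treeJoin_mk, hκ hij] using (h ⟨j, y⟩ hy).symm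
  rintro ⟨m, y⟩ hy
  by_cases hmi : i = m
  · subst hmi
    rw [localConn_treeJoin_mk, ha y hy, hκ (Ne.symm hij)]
  by_cases hmj : j = m
  · subst hmj
    rw [localConn_treeJoin_mk, hb y hy, hκ hij]
  rw [hκ hmi, hκ hmj]

lemma connResolving_treeJoin_iff (hGs : ∀ i, (Gs i).Preconnected) (hT : T.IsTree) :
    ConnResolving (treeJoin Gs v T) W ↔
      (∀ i, ConnResolving (Gs i) (Sigma.mk i ⁻¹' W)) ∧
        {i | HasOneRep (Gs i) (Sigma.mk i ⁻¹' W)}.Subsingleton := by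
  refine ⟨fun hW => ⟨fun i a b hab => ?_, ?_⟩, fun ⟨hres, hsub⟩ => ?_⟩
  · exact sigma_mk_injective (hW _ _ ((forall_localConn_treeJoin_eq_iff hGs hT a b).2 hab))
  · rintro i ⟨a, ha⟩ j ⟨b, hb⟩
    by_contra hij
    have := hW _ _ ((forall_localConn_treeJoin_eq_iff_of_ne hGs hT hij a b).2 ⟨ha, hb⟩)
    exact hij (congrArg Sigma.fst this)
  rintro ⟨i, a⟩ ⟨j, b⟩ hab
  rcases eq_or_ne i j with rfl | hij
  · rw [hres i a b ((forall_localConn_treeJoin_eq_iff hGs hT a b).1 hab)]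
  · obtain ⟨ha, hb⟩ := (forall_localConn_treeJoin_eq_iff_of_ne hGs hT hij a b).1 hab
    exact (hij (hsub ⟨a, ha⟩ ⟨b, hb⟩)).elim

open Finset

variable [Fintype ι] [∀ i, Fintype (V i)]

lemma ncard_eq_sum_ncard_preimage_mk (W : Set (Σ i, V i)) :
    W.ncard = ∑ i, (Sigma.mk i ⁻¹' W).ncard := by
  let e : W ≃ Σ i, Sigma.mk i ⁻¹' W :=
    { toFun := fun x => ⟨x.1.1, x.1.2, x.2⟩
      invFun := fun y => ⟨⟨y.1, y.2.1⟩, y.2.2⟩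
      left_inv := fun _ => rfl
      right_inv := fun _ => rfl }
  simp_rw [← Nat.card_coe_set_eq, Nat.card_congr e, Nat.card_sigma]

lemma sum_add_ite_mem [DecidableEq ι] (c : ι → ℕ) (s : Finset ι) :
    ∑ i, (c i + if i ∈ s then 1 else 0) = ∑ i, c i + #s := by
  simp [sum_add_distrib]

open Classical in
lemma sum_cdim_add_le_ncard (hGs : ∀ i, (Gs i).Preconnected) (hT : T.IsTree)
    (hW : ConnResolving (treeJoin Gs v T) W) :
    ∑ i, cdim (Gs i) + (Nat.card {i // ForcesOne (Gs i)} - 1) ≤ W.ncard := by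
  obtain ⟨hres, hsub⟩ := (connResolving_treeJoin_iff hGs hT).1 hW
  set F : Finset ι := {i | ForcesOne (Gs i)}
  set A : Finset ι := {i | HasOneRep (Gs i) (Sigma.mk i ⁻¹' W)}
  have hA : #A ≤ 1 := card_le_one_iff_subsingleton.2 (by simpa [A] using hsub)
  have hF : Nat.card {i // ForcesOne (Gs i)} = #F := by
    rw [Nat.card_eq_fintype_card, Fintype.card_subtype]
  have hle (i : ι) : cdim (Gs i) + (if i ∈ F \ A then 1 else 0) ≤ (Sigma.mk i ⁻¹' W).ncard := by
    split_ifs with hi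
    · simp only [mem_sdiff, mem_filter, mem_univ, true_and, F, A] at hi
      exact cdim_add_one_le_ncard hi.1 (hres i) hi.2
    · exact cdim_le_ncard (hres i)
  calc ∑ i, cdim (Gs i) + (Nat.card {i // ForcesOne (Gs i)} - 1)
      ≤ ∑ i, cdim (Gs i) + #(F \ A) := by
        have := le_card_sdiff A F
        omega
    _ = ∑ i, (cdim (Gs i) + if i ∈ F \ A then 1 else 0) := (sum_add_ite_mem _ _).symm
    _ ≤ ∑ i, (Sigma.mk i ⁻¹' W).ncard := sum_le_sum fun i _ => hle i
    _ = W.ncard := (ncard_eq_sum_ncard_preimage_mk W).symm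

open Classical in
lemma exists_connResolving_treeJoin_ncard_eq (hGs : ∀ i, (Gs i).Preconnected) (hT : T.IsTree) :
    ∃ W, ConnResolving (treeJoin Gs v T) W ∧
      W.ncard = ∑ i, cdim (Gs i) + (Nat.card {i // ForcesOne (Gs i)} - 1) := by
  set F : Finset ι := {i | ForcesOne (Gs i)}
  have hF : Nat.card {i // ForcesOne (Gs i)} = #F := by
    rw [Nat.card_eq_fintype_card, Fintype.card_subtype]
  -- at most one part (the one in `E`) gets a basis, every other part a resolving set
  -- without `𝟙` representation
  obtain ⟨E, hEF, hE⟩ := F.exists_subset_card_eq (min_le_right 1 #F)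
  choose B₀ hB₀ hB₀card using fun i => (connResolving_univ (G := Gs i)).exists_ncard_eq_cdim
  choose B hB hB₁ hBcard using fun i => exists_connResolving_not_hasOneRep (Gs i)
  let B' (i : ι) : Set (V i) := if i ∈ E then B₀ i else B i
  have hB' (i : ι) : Sigma.mk i ⁻¹' Set.univ.sigma B' = B' i :=
    Set.mk_preimage_sigma (Set.mem_univ i)
  refine ⟨Set.univ.sigma B', (connResolving_treeJoin_iff hGs hT).2 ⟨fun i => ?_, ?_⟩, ?_⟩
  · rw [hB']
    by_cases hi : i ∈ E
    · simpa [B', hi] using hB₀ i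
    · simpa [B', hi] using hB i
  · refine (card_le_one_iff_subsingleton.1 (hE ▸ min_le_left _ _)).anti fun i hi => ?_
    by_contra hiE
    have hi : HasOneRep (Gs i) (B' i) := hB' i ▸ hi
    simp only [B', if_neg (mt mem_coe.2 hiE)] at hi
    exact hB₁ i hi
  · have hcard (i : ι) : (B' i).ncard = cdim (Gs i) + if i ∈ F \ E then 1 else 0 := by
      by_cases hi : i ∈ E
      · simp [B', hi, hB₀card]
      · simp [B', hi, hBcard, F]
    rw [ncard_eq_sum_ncard_preimage_mk]
    simp only [hB', hcard]
    rw [sum_add_ite_mem, card_sdiff_of_subset hEF, hE, hF]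
    omega

end TreeJoin

theorem stmt13_general {k : ℕ} (V : Fin k → Type*) [∀ i, Fintype (V i)]
    (Gs : ∀ i, SimpleGraph (V i)) (hconn : ∀ i, (Gs i).Connected)
    (v : ∀ i, V i) (T : SimpleGraph (Fin k)) (hT : T.IsTree)
    (ℓ : ℕ) (hℓ : ℓ = Nat.card {i : Fin k // ForcesOne (Gs i)}) :
    cdim ((⨆ i, (Gs i).map (⟨Sigma.mk i, sigma_mk_injective⟩ : V i ↪ Σ j, V j))
        ⊔ T.map (⟨fun i => ⟨i, v i⟩, fun i j h => congrArg Sigma.fst h⟩ : Fin k ↪ Σ j, V j))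
      = max (ℓ - 1) 0 + ∑ i, cdim (Gs i) := by
  have hGs : ∀ i, (Gs i).Preconnected := fun i => (hconn i).preconnected
  change cdim (treeJoin Gs v T) = _
  rw [Nat.max_zero, add_comm, hℓ]
  exact cdim_eq_of_forall_le_ncard (fun W hW => sum_cdim_add_le_ncard hGs hT hW)
    (exists_connResolving_treeJoin_ncard_eq hGs hT)

/-- joining connected graphs `G₁,…,G_k` (each of order at least two) by a
tree `T` on chosen vertices `v₁,…,v_k` gives
`cdim G = max (ℓ-1) 0 + Σ cdim Gᵢ`, where `ℓ` counts the `Gᵢ` forcing a `𝟙`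
representation. -/
theorem stmt13 {k : ℕ} (V : Fin k → Type*) [∀ i, Fintype (V i)]
    (Gs : ∀ i, SimpleGraph (V i)) (hconn : ∀ i, (Gs i).Connected)
    (hcard : ∀ i, 2 ≤ Fintype.card (V i))
    (v : ∀ i, V i) (T : SimpleGraph (Fin k)) (hT : T.IsTree)
    (ℓ : ℕ) (hℓ : ℓ = Nat.card {i : Fin k // ForcesOne (Gs i)}) :
    cdim ((⨆ i, (Gs i).map (⟨Sigma.mk i, sigma_mk_injective⟩ : V i ↪ Σ j, V j))
        ⊔ T.map (⟨fun i => ⟨i, v i⟩, fun i j h => congrArg Sigma.fst h⟩ : Fin k ↪ Σ j, V j))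
      = max (ℓ - 1) 0 + ∑ i, cdim (Gs i) :=
  stmt13_general V Gs hconn v T hT ℓ hℓ

end ConnDim
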